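/- The exponentials of full linear logic are not determined by their rules: in full propositional linear logic augmented by a second pair of exponential connectives !′, ?′ governed by exactly the same four rules (promotion, dereliction, weakening, contraction) as !, ?, the sequent ⊢ ?(p⊥), !′p (expressing !p ⊢ !′p) is NOT provable, for p a propositional atom. -/
import Mathlib


/-- Formulas of full propositional linear logic, augmented by a second
pair of exponentials !′ (`bang'`) and ?′ (`quest'`). -/
inductive Fml where
  | pos : ℕ → Fml             -- atom p
  | neg : ℕ → Fml             -- dual atom p⊥
  | tens : Fml → Fml → Fml    -- ⊗
  | parr : Fml → Fml → Fml    -- ⅋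
  | with_ : Fml → Fml → Fml   -- &
  | plus : Fml → Fml → Fml    -- ⊕
  | bang : Fml → Fml          -- !
  | quest : Fml → Fml         -- ?
  | bang' : Fml → Fml         -- !′
  | quest' : Fml → Fml        -- ?′

/-- Linear negation, extended by De Morgan duality. -/
def Fml.dual : Fml → Fml
  | pos p => neg p
  | neg p => pos p
  | tens A B => parr A.dual B.dual
  | parr A B => tens A.dual B.dual
  | with_ A B => plus A.dual B.dual
  | plus A B => with_ A.dual B.dual
  | bang A => quest A.dual
  | quest A => bang A.dual
  | bang' A => quest' A.dual
  | quest' A => bang' A.dual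

/-- Provability of one-sided sequents in full linear logic with the two
pairs of exponentials, each governed by the same four rules. -/
inductive Prov : Multiset Fml → Prop where
  | ax (A : Fml) : Prov {A.dual, A}
  | cut {Γ Δ : Multiset Fml} {A : Fml} :
      Prov (A ::ₘ Γ) → Prov (A.dual ::ₘ Δ) → Prov (Γ + Δ)
  | tens {Γ Δ : Multiset Fml} {A B : Fml} :
      Prov (A ::ₘ Γ) → Prov (B ::ₘ Δ) → Prov (Fml.tens A B ::ₘ (Γ + Δ))
  | parr {Γ : Multiset Fml} {A B : Fml} :
      Prov (A ::ₘ B ::ₘ Γ) → Prov (Fml.parr A B ::ₘ Γ)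
  | with_ {Γ : Multiset Fml} {A B : Fml} :
      Prov (A ::ₘ Γ) → Prov (B ::ₘ Γ) → Prov (Fml.with_ A B ::ₘ Γ)
  | plus₁ {Γ : Multiset Fml} {A B : Fml} :
      Prov (A ::ₘ Γ) → Prov (Fml.plus A B ::ₘ Γ)
  | plus₂ {Γ : Multiset Fml} {A B : Fml} :
      Prov (B ::ₘ Γ) → Prov (Fml.plus A B ::ₘ Γ)
  -- rules for the first pair !, ?
  | promotion {Γ : Multiset Fml} {A : Fml} :
      (∀ C ∈ Γ, ∃ D, C = Fml.quest D) →
      Prov (A ::ₘ Γ) → Prov (Fml.bang A ::ₘ Γ)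
  | dereliction {Γ : Multiset Fml} {A : Fml} :
      Prov (A ::ₘ Γ) → Prov (Fml.quest A ::ₘ Γ)
  | weakening {Γ : Multiset Fml} (A : Fml) :
      Prov Γ → Prov (Fml.quest A ::ₘ Γ)
  | contraction {Γ : Multiset Fml} {A : Fml} :
      Prov (Fml.quest A ::ₘ Fml.quest A ::ₘ Γ) → Prov (Fml.quest A ::ₘ Γ)
  -- the same four rules for the second pair !′, ?′
  | promotion' {Γ : Multiset Fml} {A : Fml} :
      (∀ C ∈ Γ, ∃ D, C = Fml.quest' D) →
      Prov (A ::ₘ Γ) → Prov (Fml.bang' A ::ₘ Γ)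
  | dereliction' {Γ : Multiset Fml} {A : Fml} :
      Prov (A ::ₘ Γ) → Prov (Fml.quest' A ::ₘ Γ)
  | weakening' {Γ : Multiset Fml} (A : Fml) :
      Prov Γ → Prov (Fml.quest' A ::ₘ Γ)
  | contraction' {Γ : Multiset Fml} {A : Fml} :
      Prov (Fml.quest' A ::ₘ Fml.quest' A ::ₘ Γ) → Prov (Fml.quest' A ::ₘ Γ)


/-! ### A phase-semantic countermodel -/

open Pointwise

structure PM where
  x : Bool
  y : Bool
deriving DecidableEq, Fintype

instance : CommMonoid PM where
  mul a b := ⟨a.x || b.x, a.y || b.y⟩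
  one := ⟨false, false⟩
  mul_assoc := by decide
  one_mul := by decide
  mul_one := by decide
  mul_comm := by decide

lemma PM.mul_self : ∀ m : PM, m * m = m := by decide

/-- The pole. -/
def Pole : Set PM := {m | m = ⟨true, false⟩}

/-- Orthogonal. -/
def orth (S : Set PM) : Set PM := {m | ∀ x ∈ S, m * x ∈ Pole}

lemma subset_orth_orth (S : Set PM) : S ⊆ orth (orth S) := by
  intro a ha w hw
  have := hw a ha
  rwa [mul_comm]

lemma orth_anti {S T : Set PM} (h : S ⊆ T) : orth T ⊆ orth S :=
  fun m hm x hx => hm x (h hx)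

lemma orth_orth_orth (S : Set PM) : orth (orth (orth S)) = orth S :=
  subset_antisymm (orth_anti (subset_orth_orth S)) (subset_orth_orth (orth S))

lemma orth_union (S T : Set PM) : orth (S ∪ T) = orth S ∩ orth T := by
  ext m
  constructor
  · intro h
    exact ⟨fun x hx => h x (Or.inl hx), fun x hx => h x (Or.inr hx)⟩
  · rintro ⟨h1, h2⟩ x (hx | hx)
    · exact h1 x hx
    · exact h2 x hx

lemma orth_mul_orth_orth (X Y : Set PM) :
    orth (orth (orth X) * orth (orth Y)) = orth (X * Y) := by
  apply subset_antisymm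
  · exact orth_anti (Set.mul_subset_mul (subset_orth_orth X) (subset_orth_orth Y))
  · intro m hm u hu
    rcases Set.mem_mul.mp hu with ⟨a, ha, b, hb, rfl⟩
    have hmb : m * b ∈ orth X := by
      intro t ht
      have hmx : m * t ∈ orth Y := by
        intro s hs
        have := hm (t * s) (Set.mul_mem_mul ht hs)
        rwa [← mul_assoc] at this
      rw [mul_comm m b, mul_assoc]
      exact hb (m * t) hmx
    have h3 := ha (m * b) hmb
    rw [mul_left_comm]
    exact h3

lemma cl_mul_cl_subset (S T : Set PM) :
    orth (orth S) * orth (orth T) ⊆ orth (orth (S * T)) := by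
  intro m hm
  have h1 := subset_orth_orth (orth (orth S) * orth (orth T)) hm
  have h2 : orth (orth (orth S) * orth (orth T)) = orth (S * T) :=
    orth_mul_orth_orth S T
  rw [h2] at h1
  exact h1

/-- Interpretation of the atom. -/
def Xp : Set PM := {m | m = ⟨true, false⟩}

/-- The submonoid for the first exponential pair. -/
def Jbig : Set PM := {m | m.y = false}

/-- The submonoid for the second exponential pair. -/
def Jsmall : Set PM := {m | m = 1}

lemma Xp_fact : orth (orth Xp) = Xp := by
  apply subset_antisymm
  · intro m hm
    have h1 : (1 : PM) ∈ orth Xp := by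
      intro v hv
      simp only [Xp, Set.mem_setOf_eq] at hv
      subst hv
      rw [one_mul]
      rfl
    have := hm 1 h1
    rw [mul_one] at this
    exact this
  · exact subset_orth_orth Xp

lemma Jbig_one : (1 : PM) ∈ Jbig := rfl

lemma Jbig_mul : ∀ a ∈ Jbig, ∀ b ∈ Jbig, a * b ∈ Jbig := by
  rintro ⟨ax, ay⟩ ha ⟨bx, by'⟩ hb
  simp only [Jbig, Set.mem_setOf_eq] at *
  subst ha; subst hb
  rfl

lemma Jbig_bot : ∀ j ∈ Jbig, ∀ b ∈ Pole, j * b ∈ Pole := by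
  rintro ⟨jx, jy⟩ hj b hb
  simp only [Jbig, Set.mem_setOf_eq] at hj
  simp only [Pole, Set.mem_setOf_eq] at hb ⊢
  subst hb; subst hj
  show PM.mk (jx || true) (false || false) = _
  simp

lemma Jsmall_one : (1 : PM) ∈ Jsmall := rfl

lemma Jsmall_mul : ∀ a ∈ Jsmall, ∀ b ∈ Jsmall, a * b ∈ Jsmall := by
  intro a ha b hb
  simp only [Jsmall, Set.mem_setOf_eq] at *
  subst ha; subst hb
  rw [one_mul]

lemma Jsmall_bot : ∀ j ∈ Jsmall, ∀ b ∈ Pole, j * b ∈ Pole := by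
  intro j hj b hb
  simp only [Jsmall, Set.mem_setOf_eq] at hj
  subst hj
  rwa [one_mul]

/-- Interpretation of formulas as facts of the phase space. -/
def interp : Fml → Set PM
  | .pos _ => Xp
  | .neg _ => orth Xp
  | .tens A B => orth (orth (interp A * interp B))
  | .parr A B => orth (orth (interp A) * orth (interp B))
  | .with_ A B => interp A ∩ interp B
  | .plus A B => orth (orth (interp A ∪ interp B))
  | .bang A => orth (orth (interp A ∩ Jbig))
  | .quest A => orth (orth (interp A) ∩ Jbig)
  | .bang' A => orth (orth (interp A ∩ Jsmall))
  | .quest' A => orth (orth (interp A) ∩ Jsmall)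

lemma interp_fact (A : Fml) : orth (orth (interp A)) = interp A := by
  induction A with
  | pos p => exact Xp_fact
  | neg p => exact orth_orth_orth Xp
  | tens A B ihA ihB => exact orth_orth_orth _
  | parr A B ihA ihB => exact orth_orth_orth _
  | with_ A B ihA ihB =>
      apply subset_antisymm
      · intro m hm
        constructor
        · have : orth (orth (interp (A.with_ B))) ⊆ orth (orth (interp A)) :=
            orth_anti (orth_anti Set.inter_subset_left)
          rw [ihA] at this
          exact this hm
        · have : orth (orth (interp (A.with_ B))) ⊆ orth (orth (interp B)) :=
            orth_anti (orth_anti Set.inter_subset_right)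
          rw [ihB] at this
          exact this hm
      · exact subset_orth_orth _
  | plus A B ihA ihB => exact orth_orth_orth _
  | bang A ih => exact orth_orth_orth _
  | quest A ih => exact orth_orth_orth _
  | bang' A ih => exact orth_orth_orth _
  | quest' A ih => exact orth_orth_orth _

lemma interp_dual (A : Fml) : interp A.dual = orth (interp A) := by
  induction A with
  | pos p => rfl
  | neg p => exact Xp_fact.symm
  | tens A B ihA ihB =>
      show orth (orth (interp A.dual) * orth (interp B.dual)) = _
      rw [ihA, ihB, orth_mul_orth_orth]
      show _ = orth (orth (orth (interp A * interp B)))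
      rw [orth_orth_orth]
  | parr A B ihA ihB =>
      show orth (orth (interp A.dual * interp B.dual)) = _
      rw [ihA, ihB]
      rfl
  | with_ A B ihA ihB =>
      show orth (orth (interp A.dual ∪ interp B.dual)) = orth (interp A ∩ interp B)
      rw [ihA, ihB, orth_union, interp_fact, interp_fact]
  | plus A B ihA ihB =>
      show interp A.dual ∩ interp B.dual = orth (orth (orth (interp A ∪ interp B)))
      rw [ihA, ihB, orth_orth_orth, orth_union]
  | bang A ih =>
      show orth (orth (interp A.dual) ∩ Jbig) = orth (orth (orth (interp A ∩ Jbig)))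
      rw [ih, interp_fact, orth_orth_orth]
  | quest A ih =>
      show orth (orth (interp A.dual ∩ Jbig)) = _
      rw [ih]
      rfl
  | bang' A ih =>
      show orth (orth (interp A.dual) ∩ Jsmall) = orth (orth (orth (interp A ∩ Jsmall)))
      rw [ih, interp_fact, orth_orth_orth]
  | quest' A ih =>
      show orth (orth (interp A.dual ∩ Jsmall)) = _
      rw [ih]
      rfl

/-- Interpretation of a sequent: the pointwise product of the orthogonals of
the interpretations of its members. -/
def ps (Γ : Multiset Fml) : Set PM :=
  (Γ.map (fun A => orth (interp A))).prod

lemma ps_cons (A : Fml) (Γ : Multiset Fml) :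
    ps (A ::ₘ Γ) = orth (interp A) * ps Γ := by
  simp [ps]

lemma ps_add (Γ Δ : Multiset Fml) : ps (Γ + Δ) = ps Γ * ps Δ := by
  simp [ps]

lemma key {A : Fml} {Γ : Multiset Fml}
    (h : ∀ m ∈ ps (A ::ₘ Γ), m ∈ Pole) : ps Γ ⊆ interp A := by
  rw [← interp_fact A]
  intro s hs w hw
  have : w * s ∈ ps (A ::ₘ Γ) := by
    rw [ps_cons]
    exact Set.mul_mem_mul hw hs
  have := h _ this
  rwa [mul_comm] at this

lemma promKey (Js : Set PM) (h1 : (1 : PM) ∈ Js)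
    (hmul : ∀ a ∈ Js, ∀ b ∈ Js, a * b ∈ Js) (Γ : Multiset Fml)
    (hΓ : ∀ C ∈ Γ, ∃ S : Set PM, S ⊆ Js ∧ orth (interp C) = orth (orth S)) :
    ∃ K : Set PM, K ⊆ Js ∧ K ⊆ ps Γ ∧ ps Γ ⊆ orth (orth K) := by
  induction Γ using Multiset.induction_on with
  | empty =>
      refine ⟨{1}, ?_, ?_, ?_⟩
      · intro a ha
        rw [Set.mem_singleton_iff] at ha
        subst ha; exact h1
      · intro a ha
        rw [Set.mem_singleton_iff] at ha
        subst ha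
        show (1 : PM) ∈ ps 0
        simp [ps]
      · intro a ha
        apply subset_orth_orth
        simp [ps] at ha
        rw [Set.mem_singleton_iff]
        simpa [Set.mem_one] using ha
  | cons C Γ' ih =>
      obtain ⟨S, hSJ, hSeq⟩ := hΓ C (Multiset.mem_cons_self _ _)
      obtain ⟨K', hK'J, hK'ps, hpsK'⟩ := ih (fun D hD => hΓ D (Multiset.mem_cons_of_mem hD))
      refine ⟨S * K', ?_, ?_, ?_⟩
      · intro a ha
        rcases Set.mem_mul.mp ha with ⟨u, hu, v, hv, rfl⟩
        exact hmul u (hSJ hu) v (hK'J hv)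
      · rw [ps_cons]
        apply Set.mul_subset_mul _ hK'ps
        rw [hSeq]
        exact subset_orth_orth S
      · rw [ps_cons, hSeq]
        intro m hm
        rcases Set.mem_mul.mp hm with ⟨u, hu, v, hv, rfl⟩
        exact cl_mul_cl_subset S K' (Set.mul_mem_mul hu (hpsK' hv))

/-- Soundness of the phase-semantic interpretation. -/
theorem sound {Γ : Multiset Fml} (h : Prov Γ) : ∀ m ∈ ps Γ, m ∈ Pole := by
  induction h with
  | ax A =>
      intro m hm
      have : ({Fml.dual A, A} : Multiset Fml) = A.dual ::ₘ A ::ₘ 0 := rfl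
      rw [this, ps_cons, ps_cons] at hm
      rcases Set.mem_mul.mp hm with ⟨u, hu, w, hw, rfl⟩
      rcases Set.mem_mul.mp hw with ⟨v, hv, e, he, rfl⟩
      have he1 : e = 1 := by simpa [ps, Set.mem_one] using he
      subst he1
      rw [interp_dual] at hu
      have := hu v hv
      rwa [mul_one]
  | @cut Γ Δ A h1 h2 ih1 ih2 =>
      intro m hm
      rw [ps_add] at hm
      rcases Set.mem_mul.mp hm with ⟨s, hs, t, ht, rfl⟩
      have hsA : s ∈ orth (interp A.dual) := by
        rw [interp_dual]
        exact subset_orth_orth _ ((key ih1) hs)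
      apply ih2
      rw [ps_cons]
      exact Set.mul_mem_mul hsA ht
  | @tens Γ Δ A B h1 h2 ih1 ih2 =>
      intro m hm
      rw [ps_cons, ps_add] at hm
      rcases Set.mem_mul.mp hm with ⟨u, hu, w, hw, rfl⟩
      rcases Set.mem_mul.mp hw with ⟨s, hs, t, ht, rfl⟩
      have hu' : u ∈ orth (interp A * interp B) := by
        have : orth (interp (Fml.tens A B)) = orth (interp A * interp B) := by
          show orth (orth (orth (interp A * interp B))) = _
          rw [orth_orth_orth]
        rwa [this] at hu
      exact hu' _ (Set.mul_mem_mul ((key ih1) hs) ((key ih2) ht))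
  | @parr Γ A B h1 ih1 =>
      intro m hm
      rw [ps_cons] at hm
      rcases Set.mem_mul.mp hm with ⟨u, hu, s, hs, rfl⟩
      have hs' : s ∈ orth (orth (interp A) * orth (interp B)) := by
        intro w hw
        rcases Set.mem_mul.mp hw with ⟨a, ha, b, hb, rfl⟩
        have : a * (b * s) ∈ ps (A ::ₘ B ::ₘ Γ) := by
          rw [ps_cons, ps_cons]
          exact Set.mul_mem_mul ha (Set.mul_mem_mul hb hs)
        have := ih1 _ this
        rwa [mul_comm s (a * b), mul_assoc]
      exact hu s hs'
  | @with_ Γ A B h1 h2 ih1 ih2 =>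
      intro m hm
      rw [ps_cons] at hm
      rcases Set.mem_mul.mp hm with ⟨u, hu, s, hs, rfl⟩
      exact hu s ⟨(key ih1) hs, (key ih2) hs⟩
  | @plus₁ Γ A B h1 ih1 =>
      intro m hm
      rw [ps_cons] at hm
      rcases Set.mem_mul.mp hm with ⟨u, hu, s, hs, rfl⟩
      have hu' : u ∈ orth (interp A) := by
        have h2 : orth (interp (Fml.plus A B)) = orth (interp A ∪ interp B) := by
          show orth (orth (orth (interp A ∪ interp B))) = _
          rw [orth_orth_orth]
        rw [h2] at hu
        exact orth_anti Set.subset_union_left hu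
      apply ih1
      rw [ps_cons]
      exact Set.mul_mem_mul hu' hs
  | @plus₂ Γ A B h1 ih1 =>
      intro m hm
      rw [ps_cons] at hm
      rcases Set.mem_mul.mp hm with ⟨u, hu, s, hs, rfl⟩
      have hu' : u ∈ orth (interp B) := by
        have h2 : orth (interp (Fml.plus A B)) = orth (interp A ∪ interp B) := by
          show orth (orth (orth (interp A ∪ interp B))) = _
          rw [orth_orth_orth]
        rw [h2] at hu
        exact orth_anti Set.subset_union_right hu
      apply ih1
      rw [ps_cons]
      exact Set.mul_mem_mul hu' hs
  | @promotion Γ A hq h1 ih1 =>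
      intro m hm
      rw [ps_cons] at hm
      rcases Set.mem_mul.mp hm with ⟨u, hu, s, hs, rfl⟩
      have hu' : u ∈ orth (interp A ∩ Jbig) := by
        have h2 : orth (interp (Fml.bang A)) = orth (interp A ∩ Jbig) := by
          show orth (orth (orth (interp A ∩ Jbig))) = _
          rw [orth_orth_orth]
        rwa [h2] at hu
      obtain ⟨K, hKJ, hKps, hpsK⟩ := promKey Jbig Jbig_one Jbig_mul Γ (by
        intro C hC
        obtain ⟨D, rfl⟩ := hq C hC
        exact ⟨orth (interp D) ∩ Jbig, Set.inter_subset_right, rfl⟩)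
      have hKint : K ⊆ interp A ∩ Jbig := fun k hk => ⟨(key ih1) (hKps hk), hKJ hk⟩
      have hscl : s ∈ orth (orth (interp A ∩ Jbig)) :=
        orth_anti (orth_anti hKint) (hpsK hs)
      have := hscl u hu'
      rwa [mul_comm] at this
  | @dereliction Γ A h1 ih1 =>
      intro m hm
      rw [ps_cons] at hm
      rcases Set.mem_mul.mp hm with ⟨u, hu, s, hs, rfl⟩
      have hu' : u ∈ orth (interp A) := by
        have : orth (interp (Fml.quest A)) ⊆ orth (interp A) := by
          show orth (orth (orth (interp A) ∩ Jbig)) ⊆ _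
          have := orth_anti (orth_anti (Set.inter_subset_left
            (s := orth (interp A)) (t := Jbig)))
          rwa [orth_orth_orth] at this
        exact this hu
      apply ih1
      rw [ps_cons]
      exact Set.mul_mem_mul hu' hs
  | @weakening Γ A h1 ih1 =>
      intro m hm
      rw [ps_cons] at hm
      rcases Set.mem_mul.mp hm with ⟨u, hu, s, hs, rfl⟩
      have hsB : s ∈ Pole := ih1 s hs
      have hs' : s ∈ orth (orth (interp A) ∩ Jbig) := by
        intro j hj
        have := Jbig_bot j hj.2 s hsB
        rwa [mul_comm]
      exact hu s hs'
  | @contraction Γ A h1 ih1 =>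
      intro m hm
      rw [ps_cons] at hm
      rcases Set.mem_mul.mp hm with ⟨u, hu, s, hs, rfl⟩
      have hs' : s ∈ orth (orth (interp A) ∩ Jbig) := by
        intro j hj
        have hj' : j ∈ orth (orth (orth (interp A) ∩ Jbig)) := subset_orth_orth _ hj
        have : j * (j * s) ∈ ps (Fml.quest A ::ₘ Fml.quest A ::ₘ Γ) := by
          rw [ps_cons, ps_cons]
          exact Set.mul_mem_mul hj' (Set.mul_mem_mul hj' hs)
        have hb := ih1 _ this
        rw [← mul_assoc, PM.mul_self] at hb
        rwa [mul_comm]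
      exact hu s hs'
  | @promotion' Γ A hq h1 ih1 =>
      intro m hm
      rw [ps_cons] at hm
      rcases Set.mem_mul.mp hm with ⟨u, hu, s, hs, rfl⟩
      have hu' : u ∈ orth (interp A ∩ Jsmall) := by
        have h2 : orth (interp (Fml.bang' A)) = orth (interp A ∩ Jsmall) := by
          show orth (orth (orth (interp A ∩ Jsmall))) = _
          rw [orth_orth_orth]
        rwa [h2] at hu
      obtain ⟨K, hKJ, hKps, hpsK⟩ := promKey Jsmall Jsmall_one Jsmall_mul Γ (by
        intro C hC
        obtain ⟨D, rfl⟩ := hq C hC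
        exact ⟨orth (interp D) ∩ Jsmall, Set.inter_subset_right, rfl⟩)
      have hKint : K ⊆ interp A ∩ Jsmall := fun k hk => ⟨(key ih1) (hKps hk), hKJ hk⟩
      have hscl : s ∈ orth (orth (interp A ∩ Jsmall)) :=
        orth_anti (orth_anti hKint) (hpsK hs)
      have := hscl u hu'
      rwa [mul_comm] at this
  | @dereliction' Γ A h1 ih1 =>
      intro m hm
      rw [ps_cons] at hm
      rcases Set.mem_mul.mp hm with ⟨u, hu, s, hs, rfl⟩
      have hu' : u ∈ orth (interp A) := by
        have : orth (interp (Fml.quest' A)) ⊆ orth (interp A) := by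
          show orth (orth (orth (interp A) ∩ Jsmall)) ⊆ _
          have := orth_anti (orth_anti (Set.inter_subset_left
            (s := orth (interp A)) (t := Jsmall)))
          rwa [orth_orth_orth] at this
        exact this hu
      apply ih1
      rw [ps_cons]
      exact Set.mul_mem_mul hu' hs
  | @weakening' Γ A h1 ih1 =>
      intro m hm
      rw [ps_cons] at hm
      rcases Set.mem_mul.mp hm with ⟨u, hu, s, hs, rfl⟩
      have hsB : s ∈ Pole := ih1 s hs
      have hs' : s ∈ orth (orth (interp A) ∩ Jsmall) := by
        intro j hj
        have := Jsmall_bot j hj.2 s hsB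
        rwa [mul_comm]
      exact hu s hs'
  | @contraction' Γ A h1 ih1 =>
      intro m hm
      rw [ps_cons] at hm
      rcases Set.mem_mul.mp hm with ⟨u, hu, s, hs, rfl⟩
      have hs' : s ∈ orth (orth (interp A) ∩ Jsmall) := by
        intro j hj
        have hj' : j ∈ orth (orth (orth (interp A) ∩ Jsmall)) := subset_orth_orth _ hj
        have : j * (j * s) ∈ ps (Fml.quest' A ::ₘ Fml.quest' A ::ₘ Γ) := by
          rw [ps_cons, ps_cons]
          exact Set.mul_mem_mul hj' (Set.mul_mem_mul hj' hs)
        have hb := ih1 _ this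
        rw [← mul_assoc, PM.mul_self] at hb
        rwa [mul_comm]
      exact hu s hs'

/-- The exponentials are not determined by their rules: the sequent
⊢ ?(p⊥), !′p  (i.e. !p ⊢ !′p) is not provable. -/
theorem bang_seq_bang'_not_provable (p : ℕ) :
    ¬ Prov {Fml.quest (Fml.neg p), Fml.bang' (Fml.pos p)} := by
  intro h
  have hs := sound h
  set A := Fml.quest (Fml.neg p)
  set B := Fml.bang' (Fml.pos p)
  have hps : ({A, B} : Multiset Fml) = A ::ₘ B ::ₘ 0 := rfl
  have hm1 : (⟨true, false⟩ : PM) ∈ orth (interp A) := by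
    intro w hw
    have hmem : (⟨true, false⟩ : PM) ∈ orth (orth Xp) ∩ Jbig := by
      constructor
      · rw [Xp_fact]; rfl
      · rfl
    have := hw _ hmem
    rwa [mul_comm]
  have hm2 : (⟨true, true⟩ : PM) ∈ orth (interp B) := by
    have h2 : orth (interp B) = orth (Xp ∩ Jsmall) := by
      show orth (orth (orth (Xp ∩ Jsmall))) = _
      rw [orth_orth_orth]
    rw [h2]
    intro v hv
    exfalso
    rcases hv with ⟨h1', h2'⟩
    simp only [Xp, Set.mem_setOf_eq] at h1'
    subst h1'
    simp only [Jsmall, Set.mem_setOf_eq] at h2'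
    exact absurd h2' (by decide)
  have hmm : (⟨true, false⟩ : PM) * ((⟨true, true⟩ : PM) * 1) ∈ ps {A, B} := by
    rw [hps, ps_cons, ps_cons]
    refine Set.mul_mem_mul hm1 (Set.mul_mem_mul hm2 ?_)
    show (1 : PM) ∈ ps 0
    simp [ps]
  have := hs _ hmm
  rw [mul_one] at this
  simp only [Pole, Set.mem_setOf_eq] at this
  exact absurd this (by decide)
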